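/- In the addition-free theta-term system T, if γ < Ω_1 (i.e., γ = 0 or γ = ϑ_0 γ'), then for every term β one has γ ≤ β[γ], with equality only when β = 0, where β[γ] denotes the result of replacing the last zero in β by γ. -/

import Mathlib

/-!
Only `γ = ϑ₀ c` and `β = ϑ₀ β'` need thought; write `d = β[γ]`. The order gives `ϑ₀ a < ϑ₀ d`
from `a > d` and `ϑ₀ a ≤ k₀ d`, or from `a < d` and `k₀ a < ϑ₀ d`, and in the second case `k₀ a` is
`0` or `ϑ₀ w` with `w` the next term on the `ϑ₀`-spine of `a` (the chain in which `k₀` of each term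
is `ϑ₀` of the next). So `ϑ₀ c < ϑ₀ d` follows once `ϑ₀ a ≤ k₀ d` holds for every term `a` on
the spine of `c`, and that is proved by induction on `β`: for `β = 0`, `k₀ d = ϑ₀ c` lies above
the spine of `c`, and for `β = ϑ₀ β'`, `k₀ d = ϑ₀ (β'[γ])` and the first argument applies to `β'`.
Equality `β[γ] = γ` is impossible for `β ≠ 0` because substitution adds nodes.
-/

/-- Addition-free theta terms. -/
inductive TTerm : Type
  | zero : TTerm
  | theta : ℕ → TTerm → TTerm
  deriving DecidableEq

namespace TTerm

/-- `S 0 = -1`, `S (ϑ_i α) = i`. -/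
def S : TTerm → ℤ
  | zero => -1
  | theta i _ => i

/-- Membership in the term system `T`: `ϑ_i α` is formed only when `S α ≤ i + 1`. -/
inductive WF : TTerm → Prop
  | zero : WF zero
  | theta {i : ℕ} {a : TTerm} : WF a → S a ≤ (i : ℤ) + 1 → WF (theta i a)

/-- Coefficients `k_i`. -/
def k (i : ℕ) : TTerm → TTerm
  | zero => zero
  | theta j b => if j ≤ i then theta j b else k i b

mutual
/-- The linear order on theta terms. -/
inductive Lt : TTerm → TTerm → Prop
  | zero {a : TTerm} : a ≠ zero → Lt zero a
  | idx {i j : ℕ} {a b : TTerm} : i < j → Lt (theta i a) (theta j b)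
  | left {i : ℕ} {a b : TTerm} : Lt a b → Lt (k i a) (theta i b) →
      Lt (theta i a) (theta i b)
  | right {i : ℕ} {a b : TTerm} : Lt b a → Le (theta i a) (k i b) →
      Lt (theta i a) (theta i b)

inductive Le : TTerm → TTerm → Prop
  | refl {a : TTerm} : Le a a
  | of_lt {a b : TTerm} : Lt a b → Le a b
end

end TTerm

/-- Replacing the last zero of `α` by `γ`. -/
def TTerm.subst : TTerm → TTerm → TTerm
  | TTerm.zero, g => g
  | TTerm.theta i b, g => TTerm.theta i (TTerm.subst b g)

namespace TTerm

def size : TTerm → ℕ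
  | zero => 1
  | theta _ b => size b + 1

theorem size_k_le (i : ℕ) : ∀ a, size (k i a) ≤ size a
  | zero => le_rfl
  | theta j b => by
    by_cases h : j ≤ i
    · simp [k, h]
    · simpa [k, h, size] using (size_k_le i b).trans (Nat.le_succ _)

theorem size_lt_of_k_eq_theta {i j : ℕ} {a w : TTerm} (h : k i a = theta j w) :
    size w < size a := by
  simpa [h, size] using size_k_le i a

theorem size_le_size_subst : ∀ b g : TTerm, size g ≤ size (subst b g)
  | zero, _ => le_rfl
  | theta _ y, g => (size_le_size_subst y g).trans (Nat.le_succ _)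

theorem k_zero_eq_zero_or_theta_zero : ∀ a, k 0 a = zero ∨ ∃ w, k 0 a = theta 0 w
  | zero => Or.inl rfl
  | theta j b => by
    rcases Nat.eq_zero_or_pos j with rfl | hj
    · exact Or.inr ⟨b, by simp [k]⟩
    · simpa [k, Nat.not_le.mpr hj] using k_zero_eq_zero_or_theta_zero b

theorem not_lt_zero {a : TTerm} : ¬ Lt a zero := by
  rintro ⟨h⟩
  exact h rfl

theorem lt_trichotomy (a b : TTerm) : Lt a b ∨ a = b ∨ Lt b a := by
  match a, b with
  | zero, zero => exact Or.inr (Or.inl rfl)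
  | zero, theta _ _ => exact Or.inl (Lt.zero TTerm.noConfusion)
  | theta _ _, zero => exact Or.inr (Or.inr (Lt.zero TTerm.noConfusion))
  | theta i x, theta j y =>
    rcases Nat.lt_trichotomy i j with hij | rfl | hij
    · exact Or.inl (Lt.idx hij)
    · rcases lt_trichotomy x y with hxy | rfl | hyx
      · rcases lt_trichotomy (k i x) (theta i y) with h | h | h
        · exact Or.inl (Lt.left hxy h)
        · exact Or.inr (Or.inr (Lt.right hxy (h ▸ Le.refl)))
        · exact Or.inr (Or.inr (Lt.right hxy (Le.of_lt h)))
      · exact Or.inr (Or.inl rfl)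
      · rcases lt_trichotomy (k i y) (theta i x) with h | h | h
        · exact Or.inr (Or.inr (Lt.left hyx h))
        · exact Or.inl (Lt.right hyx (h ▸ Le.refl))
        · exact Or.inl (Lt.right hyx (Le.of_lt h))
    · exact Or.inr (Or.inr (Lt.idx hij))
termination_by size a + size b
decreasing_by all_goals simp only [size]; have := size_k_le i x; have := size_k_le i y; omega

theorem eq_zero_or_theta_zero_of_lt_omega_one {γ : TTerm} (h : Lt γ (theta 1 zero)) :
    γ = zero ∨ ∃ c, γ = theta 0 c := by
  rcases h with _ | ⟨hij⟩ | ⟨h⟩ | ⟨h, hle⟩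
  · exact Or.inl rfl
  · exact Or.inr ⟨_, by rw [Nat.lt_one_iff.mp hij]⟩
  · exact absurd h not_lt_zero
  · rcases hle with _ | ⟨h⟩
    exact absurd h not_lt_zero

def SpineStep (a w : TTerm) : Prop := k 0 a = theta 0 w

open Relation

theorem theta_zero_lt_of_forall_le_k {S : TTerm → Prop} {d : TTerm}
    (hS : ∀ a w, S a → SpineStep a w → S w) (hne : ∀ a, S a → a ≠ d)
    (hle : ∀ a, S a → Le (theta 0 a) (k 0 d)) (a : TTerm) (ha : S a) :
    Lt (theta 0 a) (theta 0 d) := by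
  rcases lt_trichotomy a d with had | rfl | hda
  · rcases k_zero_eq_zero_or_theta_zero a with hk | ⟨w, hw⟩
    · exact Lt.left had (hk ▸ Lt.zero TTerm.noConfusion)
    · have := size_lt_of_k_eq_theta hw
      exact Lt.left had (hw ▸ theta_zero_lt_of_forall_le_k hS hne hle w (hS a w ha hw))
  · exact absurd rfl (hne a ha)
  · exact Lt.right hda (hle a ha)
termination_by size a

theorem size_lt_of_transGen {t a : TTerm} (h : TransGen SpineStep t a) : size a < size t := by
  induction h with
  | single h => exact size_lt_of_k_eq_theta h
  | tail _ h ih => exact (size_lt_of_k_eq_theta h).trans ih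

theorem size_le_of_reflTransGen {t a : TTerm} (h : ReflTransGen SpineStep t a) :
    size a ≤ size t := by
  rcases reflTransGen_iff_eq_or_transGen.mp h with rfl | h
  exacts [le_rfl, (size_lt_of_transGen h).le]

theorem theta_zero_lt_of_transGen {t a : TTerm} (h : TransGen SpineStep t a) :
    Lt (theta 0 a) (theta 0 t) := by
  refine theta_zero_lt_of_forall_le_k (S := TransGen SpineStep t) (fun _ _ ha hw => ha.tail hw)
    (fun a ha => ?_) (fun a ha => ?_) a h
  · rintro rfl
    exact (size_lt_of_transGen ha).ne rfl
  · obtain ⟨s, hs, hsa⟩ := TransGen.head'_iff.mp ha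
    rw [hs]
    rcases reflTransGen_iff_eq_or_transGen.mp hsa with rfl | hsa
    · exact Le.refl
    · have := size_lt_of_k_eq_theta hs
      exact Le.of_lt (theta_zero_lt_of_transGen hsa)
termination_by size t

theorem theta_zero_le_of_reflTransGen {t a : TTerm} (h : ReflTransGen SpineStep t a) :
    Le (theta 0 a) (theta 0 t) := by
  rcases reflTransGen_iff_eq_or_transGen.mp h with rfl | h
  exacts [Le.refl, Le.of_lt (theta_zero_lt_of_transGen h)]

theorem theta_zero_lt_subst_of_forall_le_k {b c : TTerm}
    (hle : ∀ a, ReflTransGen SpineStep c a → Le (theta 0 a) (k 0 (subst b (theta 0 c))))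
    {a : TTerm} (ha : ReflTransGen SpineStep c a) :
    Lt (theta 0 a) (theta 0 (subst b (theta 0 c))) := by
  refine theta_zero_lt_of_forall_le_k (fun _ _ ha hw => ha.tail hw) (fun a ha => ?_) hle a ha
  rintro rfl
  have := size_le_size_subst b (theta 0 c)
  have := size_le_of_reflTransGen ha
  simp only [size] at *
  omega

theorem theta_zero_le_k_subst (c : TTerm) : ∀ (b a : TTerm), ReflTransGen SpineStep c a →
    Le (theta 0 a) (k 0 (subst b (theta 0 c)))
  | zero, _, ha => by simpa [subst, k] using theta_zero_le_of_reflTransGen ha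
  | theta 0 y, _, ha => by
    simpa [subst, k] using
      Le.of_lt (theta_zero_lt_subst_of_forall_le_k (theta_zero_le_k_subst c y) ha)
  | theta (_ + 1) y, a, ha => by simpa [subst, k] using theta_zero_le_k_subst c y a ha

theorem theta_zero_lt_theta_zero_subst (b c : TTerm) :
    Lt (theta 0 c) (theta 0 (subst b (theta 0 c))) :=
  theta_zero_lt_subst_of_forall_le_k (theta_zero_le_k_subst c b) ReflTransGen.refl

theorem lt_subst_theta_of_lt_omega_one {γ : TTerm} (hγ : Lt γ (theta 1 zero)) (i : ℕ)
    (b : TTerm) : Lt γ (subst (theta i b) γ) := by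
  rcases eq_zero_or_theta_zero_of_lt_omega_one hγ with rfl | ⟨c, rfl⟩
  · exact Lt.zero TTerm.noConfusion
  · rcases Nat.eq_zero_or_pos i with rfl | hi
    exacts [theta_zero_lt_theta_zero_subst b c, Lt.idx hi]

theorem subst_theta_ne (i : ℕ) (b γ : TTerm) : subst (theta i b) γ ≠ γ := by
  intro h
  have := congrArg size h
  have := size_le_size_subst b γ
  simp only [subst, size] at *
  omega

end TTerm

/-- If `γ < Ω₁` then `γ ≤ β[γ]`, with equality only when `β = 0`. -/
theorem stmt4 (β γ : TTerm) (hβ : TTerm.WF β) (hγ : TTerm.WF γ)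
    (hγ1 : TTerm.Lt γ (TTerm.theta 1 TTerm.zero)) :
    TTerm.Le γ (TTerm.subst β γ) ∧ (γ = TTerm.subst β γ → β = TTerm.zero) := by
  cases β with
  | zero => exact ⟨TTerm.Le.refl, fun _ => rfl⟩
  | theta i b =>
    exact ⟨.of_lt (TTerm.lt_subst_theta_of_lt_omega_one hγ1 i b),
      fun h => absurd h.symm (TTerm.subst_theta_ne i b γ)⟩
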